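/- arXiv:2212.04799 — 6 statements merged into one kernel-verified Lean document; each statement's English description precedes it below -/
import Mathlib

section
/- Let q be any prime power. For a in F_q and b in F_q^*, the number of x in F_{q^2} satisfying a + Tr_{q^2/q}(x) + b·Norm_{q^2/q}(x) = 0 equals 1 if ab = 1, and equals q + 1 if ab ≠ 1. -/
/-!
Multiplying the equation by `b` and using that the Frobenius `x ↦ x ^ q` fixes `F`, it becomes
`(b x + 1) ^ (q + 1) = 1 - a b`. On `F_{q²}` the map `y ↦ y ^ (q + 1)` is the norm, which is
surjective onto `F_q`; since `q + 1 ∣ q² - 1`, every nonzero value is then taken exactly `q + 1`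
times, while the value `0` is taken only at `y = 0`.
-/

open scoped Classical
open Finset

lemma FiniteField.exists_isPrimitiveRoot_of_dvd {E : Type*} [Field E] [Fintype E] {n : ℕ}
    (hn : n ∣ Fintype.card E - 1) : ∃ ζ : E, IsPrimitiveRoot ζ n := by
  have hn0 : 0 < n := Nat.pos_of_dvd_of_pos hn (Nat.sub_pos_of_lt Fintype.one_lt_card)
  rw [← Fintype.card_units] at hn
  obtain ⟨g, hg⟩ := card_pos.mp <|
    (IsCyclic.card_orderOf_eq_totient hn).symm ▸ Nat.totient_pos.mpr hn0
  exact ⟨g, orderOf_units.trans (mem_filter.mp hg).2 ▸ IsPrimitiveRoot.orderOf _⟩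

lemma IsPrimitiveRoot.card_nthRootsFinset_of_exists {R : Type*} [CommRing R] [IsDomain R]
    {ζ : R} {n : ℕ} (hζ : IsPrimitiveRoot ζ n) {c : R} (hc : c ≠ 0) (h : ∃ y, y ^ n = c) :
    #(Polynomial.nthRootsFinset n c) = n := by
  rw [Polynomial.nthRootsFinset_def, Multiset.toFinset_card_of_nodup (hζ.nthRoots_nodup hc),
    hζ.card_nthRoots, if_pos h]

lemma FiniteField.card_pow_eq_of_dvd {E : Type*} [Field E] [Fintype E] {n : ℕ}
    (hn : n ∣ Fintype.card E - 1) {c : E} (hc : c ≠ 0) (h : ∃ y, y ^ n = c) :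
    #{y : E | y ^ n = c} = n := by
  obtain ⟨ζ, hζ⟩ := exists_isPrimitiveRoot_of_dvd hn
  have hn0 : 0 < n := Nat.pos_of_dvd_of_pos hn (Nat.sub_pos_of_lt Fintype.one_lt_card)
  refine Eq.trans ?_ (hζ.card_nthRootsFinset_of_exists hc h)
  congr 1
  ext y
  simp [Polynomial.mem_nthRootsFinset hn0]

lemma mul_add_trace_add_mul_norm_eq {F R : Type*} [Field F] [Fintype F] [CommRing R]
    [Algebra F R] (a b : F) (x : R) :
    algebraMap F R b * (algebraMap F R a + (x + x ^ Fintype.card F) +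
        algebraMap F R b * (x * x ^ Fintype.card F)) =
      (algebraMap F R b * x + 1) ^ (Fintype.card F + 1) - algebraMap F R (1 - a * b) := by
  have hfrob : (algebraMap F R b * x + 1) ^ Fintype.card F =
      algebraMap F R b * x ^ Fintype.card F + 1 := by
    change FiniteField.frobeniusAlgHom F R (algebraMap F R b * x + 1) =
      algebraMap F R b * FiniteField.frobeniusAlgHom F R x + 1
    rw [map_add, map_mul, AlgHom.commutes, map_one]
  rw [pow_succ, hfrob, map_sub, map_one, map_mul]
  ring

section QuadraticExtension

variable {F E : Type*} [Field F] [Fintype F] [Field E] [Fintype E] [Algebra F E]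

lemma FiniteField.algebraMap_norm_eq_pow_card_add_one
    (hcard : Fintype.card E = Fintype.card F ^ 2) (x : E) :
    algebraMap F E (Algebra.norm F x) = x ^ (Fintype.card F + 1) := by
  rw [algebraMap_norm_eq_pow, Nat.card_eq_fintype_card, Nat.card_eq_fintype_card, hcard,
    ← one_pow 2, Nat.sq_sub_sq, one_pow,
    Nat.mul_div_cancel _ (Nat.sub_pos_of_lt Fintype.one_lt_card)]

lemma FiniteField.card_pow_card_add_one_eq_algebraMap
    (hcard : Fintype.card E = Fintype.card F ^ 2) {d : F} (hd : d ≠ 0) :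
    #{y : E | y ^ (Fintype.card F + 1) = algebraMap F E d} = Fintype.card F + 1 := by
  refine card_pow_eq_of_dvd ⟨Fintype.card F - 1, ?_⟩ ((map_ne_zero _).mpr hd) ?_
  · rw [hcard, ← one_pow 2, Nat.sq_sub_sq, one_pow]
  · obtain ⟨x, rfl⟩ := norm_surjective F E d
    exact ⟨x, (algebraMap_norm_eq_pow_card_add_one hcard x).symm⟩

lemma card_trace_norm_eq_card_pow (a : F) {b : F} (hb : b ≠ 0) :
    #{x : E | algebraMap F E a + (x + x ^ Fintype.card F) +
        algebraMap F E b * (x * x ^ Fintype.card F) = 0} =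
      #{y : E | y ^ (Fintype.card F + 1) = algebraMap F E (1 - a * b)} := by
  have hb' : algebraMap F E b ≠ 0 := (map_ne_zero _).mpr hb
  refine card_equiv ((Equiv.mulLeft₀ _ hb').trans (Equiv.addRight 1)) fun x => ?_
  simp only [mem_filter, mem_univ, true_and, Equiv.trans_apply, Equiv.mulLeft₀_apply,
    Equiv.coe_addRight]
  rw [← sub_eq_zero (b := algebraMap F E (1 - a * b)), ← mul_add_trace_add_mul_norm_eq,
    mul_eq_zero, or_iff_right hb']

end QuadraticExtension

/-- For `a ∈ F_q`, `b ∈ F_q^*`, the number of `x ∈ F_{q²}` with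
`a + Tr_{q²/q}(x) + b·Norm_{q²/q}(x) = 0` equals 1 if `ab = 1` and `q+1` otherwise. -/
theorem stmt2 {F E : Type*} [Field F] [Fintype F] [Field E] [Fintype E] [Algebra F E]
    (hcard : Fintype.card E = Fintype.card F ^ 2) (a b : F) (hb : b ≠ 0) :
    (a * b = 1 →
      (univ.filter (fun x : E =>
        algebraMap F E a + (x + x ^ Fintype.card F) +
          algebraMap F E b * (x * x ^ Fintype.card F) = 0)).card = 1) ∧
    (a * b ≠ 1 →
      (univ.filter (fun x : E =>
        algebraMap F E a + (x + x ^ Fintype.card F) +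
          algebraMap F E b * (x * x ^ Fintype.card F) = 0)).card
        = Fintype.card F + 1) := by
  rw [card_trace_norm_eq_card_pow a hb]
  refine ⟨fun hab => ?_, fun hab =>
    FiniteField.card_pow_card_add_one_eq_algebraMap hcard (sub_ne_zero.mpr (Ne.symm hab))⟩
  simp only [hab, sub_self, map_zero, pow_eq_zero_iff (Nat.succ_ne_zero _)]
  exact card_eq_one.mpr ⟨0, by ext; simp⟩
end

section
/- Let q = 2^l and m a positive integer. For u, v in F_{q^m}, let N(u,v) = #{y ∈ F_{q^m} : Tr_{q^m/q}(y² + uy + v) = 0}. Then N(u,v) = 2q^{m-1} if u ∈ F_q^* and Tr_{q^m/2}(v/u²) = 0; N(u,v) = 0 if u ∈ F_q^* and Tr_{q^m/2}(v/u²) = 1; and N(u,v) = q^{m-1} if u ∉ F_q^*. -/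
open scoped Classical
open Finset

/-!
Put `Q y = Tr_{E/F}(y² + u y)`. In characteristic 2 the map `Q : E → F` is `𝔽₂`-linear, and the
count is the size of its fibre over `Tr_{E/F}(v)`. Every `𝔽₂`-linear functional on `F` is
`a ↦ Tr_{F/𝔽₂}(d² a)`, and composed with `Q` it becomes `y ↦ Tr_{E/𝔽₂}((d + d² u) y)`, which
vanishes identically iff `d = 0` or `d u = 1`. So `Q` is onto unless `u ∈ F^*`, while for
`u ∈ F^*` its image is the hyperplane `Tr_{F/𝔽₂}(a / u²) = 0`.
-/

theorem AddMonoidHom.card_fiber_mul_card_image {G M H : Type*} [AddGroup G] [Fintype G]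
    [AddMonoid M] [FunLike H G M] [AddMonoidHomClass H G M] (f : H) {b : M}
    (hb : b ∈ Set.range f) : #{a | f a = b} * #(univ.image f) = Fintype.card G := by
  rw [← card_univ, card_eq_sum_card_image f univ, mul_comm, ← smul_eq_mul, ← sum_const]
  refine sum_congr rfl fun c hc => ?_
  obtain ⟨x, -, rfl⟩ := mem_image.1 hc
  exact AddMonoidHom.card_fiber_eq_of_mem_range f hb (Set.mem_range_self x)

theorem AddMonoidHom.card_fiber_mul_card_of_surjective {G M H : Type*} [AddGroup G]
    [Fintype G] [AddMonoid M] [Fintype M] [FunLike H G M] [AddMonoidHomClass H G M] {f : H}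
    (hf : Function.Surjective f) (b : M) : #{a | f a = b} * Fintype.card M = Fintype.card G := by
  rw [← AddMonoidHom.card_fiber_mul_card_image f (hf.range_eq ▸ Set.mem_univ b),
    image_univ_of_surjective hf, card_univ]

theorem Algebra.forall_trace_mul_eq_zero_iff {K L : Type*} [Field K] [Field L] [Algebra K L]
    [FiniteDimensional K L] [Algebra.IsSeparable K L] (x : L) :
    (∀ y, Algebra.trace K L (x * y) = 0) ↔ x = 0 :=
  ⟨(traceForm_nondegenerate K L).1 x, by rintro rfl y; simp⟩

theorem Submodule.mem_iff_forall_trace_mul_eq_zero {K L : Type*} [Field K] [Field L]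
    [Algebra K L] [FiniteDimensional K L] [Algebra.IsSeparable K L] (W : Submodule K L) (a : L) :
    a ∈ W ↔ ∀ c : L, (∀ w ∈ W, Algebra.trace K L (c * w) = 0) → Algebra.trace K L (c * a) = 0 := by
  rw [← Subspace.forall_mem_dualAnnihilator_apply_eq_zero_iff]
  refine ⟨fun h c hc => h (Algebra.traceForm K L c) ((mem_dualAnnihilator _).2 hc),
    fun h φ hφ => ?_⟩
  obtain ⟨c, rfl⟩ := (LinearMap.BilinForm.toDual _ (traceForm_nondegenerate K L)).surjective φ
  have hc := (mem_dualAnnihilator _).1 hφ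
  simp only [LinearMap.BilinForm.toDual_def, Algebra.traceForm_apply] at hc ⊢
  exact h c hc

theorem Algebra.trace_pow_card {K L : Type*} [Field K] [Fintype K] [Field L] [Finite L]
    [Algebra K L] (x : L) : Algebra.trace K L (x ^ Fintype.card K) = Algebra.trace K L x :=
  Algebra.trace_eq_of_algEquiv (FiniteField.frobeniusAlgEquivOfAlgebraic K L) x

section TraceQuadratic

variable {F E : Type*} [Field F] [Field E] [Algebra F E]
  [Algebra (ZMod 2) F] [Algebra (ZMod 2) E] [IsScalarTower (ZMod 2) F E]

variable (F) in
noncomputable def traceQuadratic (u : E) : E →ₗ[ZMod 2] F where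
  toFun y := Algebra.trace F E (y ^ 2 + u * y)
  map_add' y z := by
    have := charP_of_injective_algebraMap' (ZMod 2) (A := E) 2
    rw [← map_add, CharTwo.add_sq]
    ring_nf
  map_smul' c y := by
    rw [smul_pow, ZMod.pow_card, mul_smul_comm, ← smul_add, RingHom.id_apply,
      LinearMap.map_smul_of_tower]

theorem traceQuadratic_apply (u y : E) :
    traceQuadratic F u y = Algebra.trace F E (y ^ 2 + u * y) := rfl

variable [Finite F] [Finite E]

theorem trace_sq_mul_traceQuadratic (u : E) (d : F) (y : E) :
    Algebra.trace (ZMod 2) F (d ^ 2 * traceQuadratic F u y)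
      = Algebra.trace (ZMod 2) E ((algebraMap F E d + algebraMap F E d ^ 2 * u) * y) := by
  have hsq := Algebra.trace_pow_card (K := ZMod 2) (algebraMap F E d * y)
  rw [ZMod.card] at hsq
  rw [traceQuadratic_apply, ← smul_eq_mul, ← map_smul, Algebra.trace_trace, Algebra.smul_def,
    map_pow, mul_add, map_add, ← mul_pow, hsq, add_mul, map_add, mul_assoc]

theorem forall_trace_sq_mul_traceQuadratic_eq_zero_iff (u : E) (d : F) :
    (∀ y, Algebra.trace (ZMod 2) F (d ^ 2 * traceQuadratic F u y) = 0)
      ↔ d = 0 ∨ algebraMap F E d * u = 1 := by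
  have := charP_of_injective_algebraMap' (ZMod 2) (A := E) 2
  simp_rw [trace_sq_mul_traceQuadratic, Algebra.forall_trace_mul_eq_zero_iff]
  rw [show algebraMap F E d + algebraMap F E d ^ 2 * u
      = algebraMap F E d * (1 + algebraMap F E d * u) by ring,
    mul_eq_zero, CharTwo.add_eq_zero, FaithfulSMul.algebraMap_eq_zero_iff, eq_comm (a := 1)]

theorem mem_range_traceQuadratic_iff (u : E) (a : F) :
    a ∈ LinearMap.range (traceQuadratic F u)
      ↔ ∀ d : F, algebraMap F E d * u = 1 → Algebra.trace (ZMod 2) F (d ^ 2 * a) = 0 := by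
  have := charP_of_injective_algebraMap' (ZMod 2) (A := F) 2
  rw [Submodule.mem_iff_forall_trace_mul_eq_zero, LinearMap.range_eq_map]
  simp only [Submodule.mem_map, Submodule.mem_top, true_and, forall_exists_index,
    forall_apply_eq_imp_iff]
  refine ⟨fun h d hd => h _ ((forall_trace_sq_mul_traceQuadratic_eq_zero_iff u d).2 (Or.inr hd)),
    fun h c hc => ?_⟩
  obtain ⟨d, rfl⟩ := (isSquare_of_charTwo' c).exists_sq
  rcases (forall_trace_sq_mul_traceQuadratic_eq_zero_iff u d).1 hc with rfl | hd
  · simp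
  · exact h d hd

theorem traceQuadratic_surjective {u : E} (hu : ¬∃ u₀ : F, u₀ ≠ 0 ∧ algebraMap F E u₀ = u) :
    Function.Surjective (traceQuadratic F u) := fun a =>
  LinearMap.mem_range.1 <| (mem_range_traceQuadratic_iff u a).2 fun d hd =>
    (hu ⟨d⁻¹, inv_ne_zero (by rintro rfl; simp at hd),
      by rw [map_inv₀, eq_inv_of_mul_eq_one_right hd]⟩).elim

theorem mem_range_traceQuadratic_algebraMap_iff {u₀ : F} (hu₀ : u₀ ≠ 0) (a : F) :
    a ∈ LinearMap.range (traceQuadratic F (algebraMap F E u₀))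
      ↔ Algebra.trace (ZMod 2) F (a / u₀ ^ 2) = 0 := by
  have hd : ∀ d : F, algebraMap F E d * algebraMap F E u₀ = 1 ↔ d = u₀⁻¹ := fun d => by
    rw [← map_mul, map_eq_one_iff _ (algebraMap F E).injective, mul_eq_one_iff_eq_inv₀ hu₀]
  simp only [mem_range_traceQuadratic_iff, hd, forall_eq, inv_pow, inv_mul_eq_div]

variable [Fintype E]

theorem fiber_traceQuadratic_algebraMap_eq_empty {u₀ : F} (hu₀ : u₀ ≠ 0) {a : F}
    (ha : Algebra.trace (ZMod 2) F (a / u₀ ^ 2) ≠ 0) :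
    ({y | traceQuadratic F (algebraMap F E u₀) y = a} : Finset E) = ∅ :=
  filter_eq_empty_iff.2 fun y _ hy =>
    ha ((mem_range_traceQuadratic_algebraMap_iff hu₀ a).1 ⟨y, hy⟩)

variable [Fintype F]

theorem card_image_traceQuadratic_algebraMap {u₀ : F} (hu₀ : u₀ ≠ 0) :
    #(univ.image (traceQuadratic F (algebraMap F E u₀))) * 2 = Fintype.card F := by
  have hsurj : Function.Surjective ((Algebra.trace (ZMod 2) F).comp
      (LinearMap.mulRight (ZMod 2) (u₀ ^ 2)⁻¹)) :=
    (Algebra.trace_surjective (ZMod 2) F).comp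
      (mul_right_surjective₀ (inv_ne_zero (pow_ne_zero 2 hu₀)))
  have hcard := AddMonoidHom.card_fiber_mul_card_of_surjective hsurj 0
  rw [ZMod.card] at hcard
  rw [← hcard]
  congr 2
  ext a
  simp only [mem_image, mem_univ, true_and, mem_filter, LinearMap.coe_comp, Function.comp_apply,
    LinearMap.mulRight_apply, ← div_eq_mul_inv,
    ← mem_range_traceQuadratic_algebraMap_iff hu₀ (E := E)]
  exact LinearMap.mem_range.symm

theorem card_fiber_traceQuadratic_algebraMap {u₀ : F} (hu₀ : u₀ ≠ 0) {a : F}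
    (ha : Algebra.trace (ZMod 2) F (a / u₀ ^ 2) = 0) :
    #{y | traceQuadratic F (algebraMap F E u₀) y = a} * Fintype.card F = 2 * Fintype.card E := by
  rw [← card_image_traceQuadratic_algebraMap (E := E) hu₀, ← mul_assoc,
    AddMonoidHom.card_fiber_mul_card_image (traceQuadratic F (algebraMap F E u₀))
      (LinearMap.mem_range.1 ((mem_range_traceQuadratic_algebraMap_iff hu₀ a).2 ha)),
    mul_comm]

end TraceQuadratic

theorem stmt5_general {F E : Type*} [Field F] [Fintype F] [Field E] [Fintype E]
    [Algebra F E] [Algebra (ZMod 2) E]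
    (m : ℕ) (hm : 0 < m)
    (hE : Fintype.card E = Fintype.card F ^ m)
    (u v : E) :
    ((∃ u₀ : F, u₀ ≠ 0 ∧ algebraMap F E u₀ = u) →
      (Algebra.trace (ZMod 2) E (v / u ^ 2) = 0 →
        (univ.filter (fun y : E =>
          Algebra.trace F E (y ^ 2 + u * y + v) = 0)).card
          = 2 * Fintype.card F ^ (m - 1)) ∧
      (Algebra.trace (ZMod 2) E (v / u ^ 2) = 1 →
        (univ.filter (fun y : E =>
          Algebra.trace F E (y ^ 2 + u * y + v) = 0)).card = 0)) ∧
    ((¬ ∃ u₀ : F, u₀ ≠ 0 ∧ algebraMap F E u₀ = u) →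
      (univ.filter (fun y : E =>
        Algebra.trace F E (y ^ 2 + u * y + v) = 0)).card
        = Fintype.card F ^ (m - 1)) := by
  have := charP_of_injective_algebraMap' (ZMod 2) (A := E) 2
  have := (algebraMap F E).charP (algebraMap F E).injective 2
  let := ZMod.algebra F 2
  have : IsScalarTower (ZMod 2) F E := .of_algebraMap_eq' (RingHom.ext_zmod _ _)
  have hq : Fintype.card E = Fintype.card F ^ (m - 1) * Fintype.card F := by
    rw [hE, ← pow_succ, Nat.sub_add_cancel hm]
  have hfiber : ∀ y : E, Algebra.trace F E (y ^ 2 + u * y + v) = 0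
      ↔ traceQuadratic F u y = Algebra.trace F E v := fun y => by
    rw [map_add, CharTwo.add_eq_zero, traceQuadratic_apply]
  simp only [hfiber]
  refine ⟨?_, fun hu => ?_⟩
  · rintro ⟨u₀, hu₀, rfl⟩
    have htrace : Algebra.trace (ZMod 2) E (v / algebraMap F E u₀ ^ 2)
        = Algebra.trace (ZMod 2) F (Algebra.trace F E v / u₀ ^ 2) := by
      rw [← Algebra.trace_trace (S := F), ← map_pow, div_eq_inv_mul, ← map_inv₀,
        ← Algebra.smul_def, map_smul, smul_eq_mul, div_eq_inv_mul]
    rw [htrace]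
    refine ⟨fun h => ?_, fun h => ?_⟩
    · refine Nat.eq_of_mul_eq_mul_right (Fintype.card_pos (α := F)) ?_
      rw [card_fiber_traceQuadratic_algebraMap hu₀ h, hq, mul_assoc]
    · rw [fiber_traceQuadratic_algebraMap_eq_empty hu₀ (h ▸ one_ne_zero), card_empty]
  · refine Nat.eq_of_mul_eq_mul_right (Fintype.card_pos (α := F)) ?_
    rw [AddMonoidHom.card_fiber_mul_card_of_surjective (traceQuadratic_surjective hu), hq]

/-- `q = 2^l`, `N(u,v) = #{y ∈ F_{q^m} : Tr_{q^m/q}(y² + uy + v) = 0}`.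
If `u ∈ F_q^*` then `N = 2q^{m-1}` or `0` according to whether `Tr_{q^m/2}(v/u²)` is
`0` or `1`; if `u ∉ F_q^*` then `N = q^{m-1}`. -/
theorem stmt5 {F E : Type*} [Field F] [Fintype F] [Field E] [Fintype E]
    [Algebra F E] [Algebra (ZMod 2) E]
    (l m : ℕ) (hl : 0 < l) (hm : 0 < m)
    (hF : Fintype.card F = 2 ^ l) (hE : Fintype.card E = Fintype.card F ^ m)
    (u v : E) :
    ((∃ u₀ : F, u₀ ≠ 0 ∧ algebraMap F E u₀ = u) →
      (Algebra.trace (ZMod 2) E (v / u ^ 2) = 0 →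
        (univ.filter (fun y : E =>
          Algebra.trace F E (y ^ 2 + u * y + v) = 0)).card
          = 2 * Fintype.card F ^ (m - 1)) ∧
      (Algebra.trace (ZMod 2) E (v / u ^ 2) = 1 →
        (univ.filter (fun y : E =>
          Algebra.trace F E (y ^ 2 + u * y + v) = 0)).card = 0)) ∧
    ((¬ ∃ u₀ : F, u₀ ≠ 0 ∧ algebraMap F E u₀ = u) →
      (univ.filter (fun y : E =>
        Algebra.trace F E (y ^ 2 + u * y + v) = 0)).card
        = Fintype.card F ^ (m - 1)) :=
  stmt5_general m hm hE u v
end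

section
/- Let q be a prime power. The dual of the code C over F_{q^2} with generator matrix whose columns are (0,1,0)ᵀ and all (1,x,y)ᵀ with Tr_{q^2/q}(x) + Norm_{q^2/q}(y) = 0 has minimum distance exactly 3; equivalently, any two columns of the generator matrix are linearly independent over F_{q^2}, but there exist three columns that are linearly dependent. -/
open Polynomial

theorem exd {F E : Type*} [Field F] [Fintype F] [Field E] [Fintype E] [Algebra F E]
    (hcard : Fintype.card E = Fintype.card F ^ 2) :
    ∃ d : E, d ≠ 0 ∧ d + d ^ Fintype.card F = 0 := by
  classical
  set q := Fintype.card F with hq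
  have hq2 : 2 ≤ q := Fintype.one_lt_card
  obtain ⟨p, hpc⟩ := CharP.exists F
  haveI := hpc
  obtain ⟨n, hpn, hcardF⟩ := FiniteField.card F p
  haveI : Fact p.Prime := ⟨hpn⟩
  haveI : CharP E p := charP_of_injective_algebraMap (algebraMap F E).injective p
  have hfrob : ∀ x y : E, (x + y) ^ q = x ^ q + y ^ q := by
    intro x y
    rw [hq, hcardF]
    exact add_pow_char_pow x y p n
  have hpowE : ∀ x : E, (x ^ q) ^ q = x := by
    intro x
    rw [← pow_mul, ← sq, ← hcard]
    exact FiniteField.pow_card x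
  set P : E[X] := X ^ q - X with hP
  have hdeg : P.natDegree = q := by
    rw [hP, Polynomial.natDegree_sub_eq_left_of_natDegree_lt, natDegree_X_pow]
    rw [natDegree_X, natDegree_X_pow]; omega
  have hPne : P ≠ 0 := by
    intro h
    rw [h, natDegree_zero] at hdeg
    omega
  have hnotinj : ¬ Function.Injective (fun x : E => x + x ^ q) := by
    intro hinj
    have hmaps : ∀ x : E, (x + x ^ q) ∈ P.roots.toFinset := by
      intro x
      rw [Multiset.mem_toFinset, mem_roots hPne]
      rw [hP]
      simp only [IsRoot.def, eval_sub, eval_pow, eval_X]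
      rw [hfrob, hpowE]
      ring
    have hle : Fintype.card E ≤ P.roots.toFinset.card := by
      have := Finset.card_le_card_of_injOn (s := Finset.univ) (fun x : E => x + x ^ q)
        (fun x _ => hmaps x) (fun x _ y _ h => hinj h)
      simpa using this
    have hle2 : P.roots.toFinset.card ≤ q := by
      calc P.roots.toFinset.card ≤ Multiset.card P.roots := Multiset.toFinset_card_le _
        _ ≤ P.natDegree := P.card_roots'
        _ ≤ q := le_of_eq hdeg
    have h3 : Fintype.card E ≤ q := hle.trans hle2
    rw [hcard] at h3
    nlinarith
  rw [Function.not_injective_iff] at hnotinj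
  obtain ⟨x, y, hxy, hne⟩ := hnotinj
  refine ⟨x - y, sub_ne_zero.mpr hne, ?_⟩
  have hsub : (x - y) ^ q = x ^ q - y ^ q := by
    rw [hq, hcardF]
    exact sub_pow_char_pow x y n
  rw [hsub]
  have hxy' : x + x ^ q = y + y ^ q := hxy
  linear_combination hxy'

open scoped Classical
open Finset

/-- the dual of `C_{f₁,g₁}` has minimum distance exactly 3:
any two (distinct) columns of the generator matrix are linearly independent over
`F_{q²}`, but some three distinct columns are linearly dependent. -/
theorem stmt10 {F E : Type*} [Field F] [Fintype F] [Field E] [Fintype E] [Algebra F E]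
    (hcard : Fintype.card E = Fintype.card F ^ 2)
    (S : Set (E × E × E))
    (hS : S = {v | v = (0, 1, 0) ∨ ∃ x y : E,
      x + x ^ Fintype.card F + y * y ^ Fintype.card F = 0 ∧ v = (1, x, y)}) :
    (∀ c₁ ∈ S, ∀ c₂ ∈ S, c₁ ≠ c₂ →
      ∀ a b : E, a • c₁ + b • c₂ = 0 → a = 0 ∧ b = 0) ∧
    (∃ c₁ ∈ S, ∃ c₂ ∈ S, ∃ c₃ ∈ S, c₁ ≠ c₂ ∧ c₁ ≠ c₃ ∧ c₂ ≠ c₃ ∧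
      ∃ a b c : E, ¬(a = 0 ∧ b = 0 ∧ c = 0) ∧ a • c₁ + b • c₂ + c • c₃ = 0) := by
  subst hS
  constructor
  · rintro c₁ (rfl | ⟨x₁, y₁, h₁, rfl⟩) c₂ (rfl | ⟨x₂, y₂, h₂, rfl⟩) hne a b hab
    · exact absurd rfl hne
    · simp only [Prod.smul_mk, smul_eq_mul, Prod.mk_add_mk, Prod.mk_eq_zero] at hab
      obtain ⟨e1, e2, e3⟩ := hab
      have hb : b = 0 := by linear_combination e1
      subst hb
      refine ⟨by linear_combination e2, rfl⟩
    · simp only [Prod.smul_mk, smul_eq_mul, Prod.mk_add_mk, Prod.mk_eq_zero] at hab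
      obtain ⟨e1, e2, e3⟩ := hab
      have ha : a = 0 := by linear_combination e1
      subst ha
      refine ⟨rfl, by linear_combination e2⟩
    · simp only [Prod.smul_mk, smul_eq_mul, Prod.mk_add_mk, Prod.mk_eq_zero] at hab
      obtain ⟨e1, e2, e3⟩ := hab
      by_cases ha : a = 0
      · subst ha
        exact ⟨rfl, by linear_combination e1⟩
      · exfalso
        apply hne
        have hb : b = -a := by linear_combination e1
        subst hb
        have hx : x₁ = x₂ := by
          rcases mul_eq_zero.mp (show a * (x₁ - x₂) = 0 by linear_combination e2) with h | h
          · exact absurd h ha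
          · exact sub_eq_zero.mp h
        have hy : y₁ = y₂ := by
          rcases mul_eq_zero.mp (show a * (y₁ - y₂) = 0 by linear_combination e3) with h | h
          · exact absurd h ha
          · exact sub_eq_zero.mp h
        rw [hx, hy]
  · obtain ⟨d, hd0, hd⟩ := exd hcard
    have hq0 : Fintype.card F ≠ 0 := Fintype.card_ne_zero
    refine ⟨(0, 1, 0), Or.inl rfl, (1, 0, 0), Or.inr ⟨0, 0, by simp [zero_pow hq0], rfl⟩,
      (1, d, 0), Or.inr ⟨d, 0, by simpa [zero_pow hq0] using hd, rfl⟩,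
      ?_, ?_, ?_, d, 1, -1, ?_, ?_⟩
    · simp [Prod.ext_iff]
    · simp [Prod.ext_iff]
    · simp [Prod.ext_iff, Ne.symm hd0]
    · simp
    · simp only [Prod.smul_mk, smul_eq_mul, Prod.mk_add_mk, Prod.mk_eq_zero]
      refine ⟨by ring, by ring, by ring⟩
end

section
/- Let q = 2^l be even and let χ' be the canonical additive character of F_{q^m}. For a ∈ F_q, b ∈ F_q^*, c ∈ F_{q^m}, define Ω(a,b,c) = Σ_{z ∈ F_q^*} χ((za)) · Σ_{y ∈ F_{q^m}} χ'(zby² + zcy), where χ is the canonical additive character of F_q. Then Ω(a,b,c) = q^m if c ∈ F_q^* and Tr_{q/2}(ab/c²) = 0; Ω(a,b,c) = -q^m if c ∈ F_q^* and Tr_{q/2}(ab/c²) = 1; and Ω(a,b,c) = 0 if c ∉ F_q^*. -/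
open scoped Classical
open Finset

private lemma neg_one_pow_val_add (a b : ZMod 2) :
    (-1 : ℤ) ^ ((a + b).val) = (-1 : ℤ) ^ a.val * (-1 : ℤ) ^ b.val := by revert a b; decide

private lemma char_sum_eq {E : Type*} [Field E] [Fintype E] [Algebra (ZMod 2) E] (α : E) :
    ∑ y : E, (-1 : ℤ) ^ (Algebra.trace (ZMod 2) E (α * y)).val =
      if α = 0 then (Fintype.card E : ℤ) else 0 := by
  haveI : Module.Finite (ZMod 2) E := Module.Finite.of_finite
  split_ifs with h
  · simp [h, Finset.card_univ]
  · have key : ∑ y : E, (-1 : ℤ) ^ (Algebra.trace (ZMod 2) E y).val = 0 := by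
      obtain ⟨t, ht⟩ := Algebra.trace_surjective (ZMod 2) E 1
      have h1 : ∑ y : E, (-1 : ℤ) ^ (Algebra.trace (ZMod 2) E (y + t)).val
          = ∑ y : E, (-1 : ℤ) ^ (Algebra.trace (ZMod 2) E y).val :=
        Fintype.sum_equiv (Equiv.addRight t) _ _ (fun y => rfl)
      have h2 : ∀ y : E, (-1 : ℤ) ^ (Algebra.trace (ZMod 2) E (y + t)).val
          = (-1) ^ (Algebra.trace (ZMod 2) E y).val * (-1) := by
        intro y
        rw [map_add, neg_one_pow_val_add, ht]
        norm_num [ZMod.val_one]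
      rw [Finset.sum_congr rfl (fun y _ => h2 y), ← Finset.sum_mul] at h1
      linarith
    calc ∑ y : E, (-1 : ℤ) ^ (Algebra.trace (ZMod 2) E (α * y)).val
        = ∑ y : E, (-1 : ℤ) ^ (Algebra.trace (ZMod 2) E y).val :=
          Fintype.sum_equiv (Equiv.mulLeft₀ α h) _ _ (fun y => rfl)
      _ = 0 := key

/-- for `q = 2^l`, the exponential sum
`Ω(a,b,c) = ∑_{z∈F_q^*} χ(za) ∑_{y∈F_{q^m}} χ'(zby² + zcy)` equals `q^m`, `-q^m`
or `0` according to the stated cases. -/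
theorem stmt11 {F E : Type*} [Field F] [Fintype F] [Field E] [Fintype E]
    [Algebra F E] [Algebra (ZMod 2) F] [Algebra (ZMod 2) E]
    (l m : ℕ) (hl : 0 < l) (hm : 0 < m)
    (hF : Fintype.card F = 2 ^ l) (hE : Fintype.card E = Fintype.card F ^ m)
    (a b : F) (hb : b ≠ 0) (c : E) (Ω : ℤ)
    (hΩ : Ω = ∑ z ∈ univ.filter (fun z : F => z ≠ 0),
      (-1 : ℤ) ^ (Algebra.trace (ZMod 2) F (z * a)).val *
        ∑ y : E, (-1 : ℤ) ^ (Algebra.trace (ZMod 2) E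
          (algebraMap F E (z * b) * y ^ 2 + algebraMap F E z * c * y)).val) :
    (∀ c₀ : F, c₀ ≠ 0 → c = algebraMap F E c₀ →
      (Algebra.trace (ZMod 2) F (a * b / c₀ ^ 2) = 0 →
        Ω = (Fintype.card F : ℤ) ^ m) ∧
      (Algebra.trace (ZMod 2) F (a * b / c₀ ^ 2) = 1 →
        Ω = -(Fintype.card F : ℤ) ^ m)) ∧
    ((¬ ∃ c₀ : F, c₀ ≠ 0 ∧ c = algebraMap F E c₀) → Ω = 0) := by
  haveI : CharP F 2 := charP_of_injective_algebraMap (algebraMap (ZMod 2) F).injective 2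
  haveI : CharP E 2 := charP_of_injective_algebraMap (algebraMap (ZMod 2) E).injective 2
  -- squaring is injective and surjective in char 2 finite fields
  have sqinjE : Function.Injective (fun x : E => x ^ 2) := by
    intro u v huv
    simp only at huv
    have h0 : (u + v) ^ 2 = 0 := by
      rw [CharTwo.add_sq, huv, CharTwo.add_self_eq_zero]
    have := pow_eq_zero_iff (n := 2) (by norm_num) |>.mp h0
    have hv : u = -v := by linear_combination this
    rwa [CharTwo.neg_eq] at hv
  have sqinjF : Function.Injective (fun x : F => x ^ 2) := by
    intro u v huv
    simp only at huv
    have h0 : (u + v) ^ 2 = 0 := by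
      rw [CharTwo.add_sq, huv, CharTwo.add_self_eq_zero]
    have := pow_eq_zero_iff (n := 2) (by norm_num) |>.mp h0
    have hv : u = -v := by linear_combination this
    rwa [CharTwo.neg_eq] at hv
  have sqsurjE : Function.Surjective (fun x : E => x ^ 2) :=
    Finite.injective_iff_surjective.mp sqinjE
  have sqsurjF : Function.Surjective (fun x : F => x ^ 2) :=
    Finite.injective_iff_surjective.mp sqinjF
  -- trace of a square
  have tr_sq : ∀ x : E, Algebra.trace (ZMod 2) E (x ^ 2) = Algebra.trace (ZMod 2) E x := by
    have hcomm : ∀ r : ZMod 2, algebraMap (ZMod 2) E r ^ 2 = algebraMap (ZMod 2) E r := by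
      intro r; rw [← map_pow]; congr 1; revert r; decide
    let f : E →ₐ[ZMod 2] E :=
      { toFun := fun x => x ^ 2
        map_one' := one_pow 2
        map_mul' := fun x y => mul_pow x y 2
        map_zero' := zero_pow two_ne_zero
        map_add' := fun x y => CharTwo.add_sq x y
        commutes' := hcomm }
    let φ : E ≃ₐ[ZMod 2] E := AlgEquiv.ofBijective f ⟨sqinjE, sqsurjE⟩
    intro x
    exact Algebra.trace_eq_of_algEquiv φ x
  have inj := (algebraMap F E).injective
  have inner : ∀ z : F,
      (∑ y : E, (-1 : ℤ) ^ (Algebra.trace (ZMod 2) E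
        (algebraMap F E (z * b) * y ^ 2 + algebraMap F E z * c * y)).val) =
      if algebraMap F E (z * b) = (algebraMap F E z * c) ^ 2
        then (Fintype.card E : ℤ) else 0 := by
    intro z
    obtain ⟨v, hv⟩ := sqsurjE (algebraMap F E (z * b))
    simp only at hv
    set w := algebraMap F E z * c with hw
    have step : ∀ y : E,
        Algebra.trace (ZMod 2) E (algebraMap F E (z * b) * y ^ 2 + w * y)
          = Algebra.trace (ZMod 2) E ((v + w) * y) := by
      intro y
      have h1 : algebraMap F E (z * b) * y ^ 2 = (v * y) ^ 2 := by rw [← hv]; ring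
      rw [h1, map_add, tr_sq, add_mul, map_add]
    rw [Finset.sum_congr rfl (fun y _ => by rw [step y]), char_sum_eq]
    have hiff : v + w = 0 ↔ algebraMap F E (z * b) = w ^ 2 := by
      constructor
      · intro h0
        have hveq : v = w := by rw [eq_neg_of_add_eq_zero_left h0, CharTwo.neg_eq]
        rw [← hv, hveq]
      · intro h
        have hsq : v ^ 2 = w ^ 2 := by rw [hv, h]
        have hveq : v = w := sqinjE hsq
        rw [hveq, CharTwo.add_self_eq_zero]
    rw [if_congr hiff rfl rfl]
  have hΩ' : Ω = ∑ z ∈ univ.filter (fun z : F => z ≠ 0),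
      (-1 : ℤ) ^ (Algebra.trace (ZMod 2) F (z * a)).val *
        (if algebraMap F E (z * b) = (algebraMap F E z * c) ^ 2
          then (Fintype.card E : ℤ) else 0) := by
    rw [hΩ]; exact Finset.sum_congr rfl (fun z _ => by rw [inner z])
  have hcard : (Fintype.card E : ℤ) = (Fintype.card F : ℤ) ^ m := by exact_mod_cast hE
  constructor
  · intro c₀ hc₀ hc
    have hz0 : (b / c₀ ^ 2 : F) ≠ 0 := div_ne_zero hb (pow_ne_zero 2 hc₀)
    have hcond : ∀ z : F, z ≠ 0 →
        (algebraMap F E (z * b) = (algebraMap F E z * c) ^ 2 ↔ z = b / c₀ ^ 2) := by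
      intro z hz
      rw [hc, ← map_mul, ← map_pow, inj.eq_iff]
      constructor
      · intro h
        have h' : z * b = z * (z * c₀ ^ 2) := by linear_combination h
        have hb' := mul_left_cancel₀ hz h'
        rw [eq_div_iff (pow_ne_zero 2 hc₀)]
        linear_combination hb'.symm
      · rintro rfl
        field_simp
    have hΩval : Ω = (-1 : ℤ) ^ (Algebra.trace (ZMod 2) F (a * b / c₀ ^ 2)).val *
        (Fintype.card F : ℤ) ^ m := by
      rw [hΩ']
      calc (∑ z ∈ univ.filter (fun z : F => z ≠ 0),
            (-1 : ℤ) ^ (Algebra.trace (ZMod 2) F (z * a)).val *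
              (if algebraMap F E (z * b) = (algebraMap F E z * c) ^ 2
                then (Fintype.card E : ℤ) else 0))
          = ∑ z ∈ univ.filter (fun z : F => z ≠ 0),
            (if z = b / c₀ ^ 2 then
              (-1 : ℤ) ^ (Algebra.trace (ZMod 2) F (z * a)).val *
                (Fintype.card E : ℤ) else 0) := by
            refine Finset.sum_congr rfl (fun z hz => ?_)
            rw [Finset.mem_filter] at hz
            rw [if_congr (hcond z hz.2) rfl rfl, mul_ite, mul_zero]
        _ = (-1 : ℤ) ^ (Algebra.trace (ZMod 2) F ((b / c₀ ^ 2) * a)).val *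
              (Fintype.card E : ℤ) := by
            rw [Finset.sum_ite_eq' (univ.filter (fun z : F => z ≠ 0)) (b / c₀ ^ 2)
              (fun z => (-1 : ℤ) ^ (Algebra.trace (ZMod 2) F (z * a)).val *
                (Fintype.card E : ℤ))]
            rw [if_pos (by simp [hz0])]
        _ = (-1 : ℤ) ^ (Algebra.trace (ZMod 2) F (a * b / c₀ ^ 2)).val *
              (Fintype.card F : ℤ) ^ m := by
            rw [show (b / c₀ ^ 2) * a = a * b / c₀ ^ 2 from by ring, hcard]
    constructor
    · intro h0
      rw [hΩval, h0]
      norm_num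
    · intro h1
      rw [hΩval, h1, show ((1 : ZMod 2)).val = 1 from rfl]
      ring
  · intro hnc
    rw [hΩ']
    refine Finset.sum_eq_zero (fun z hz => ?_)
    rw [Finset.mem_filter] at hz
    rw [if_neg, mul_zero]
    intro h
    have hzne : z ≠ 0 := hz.2
    have hz2 : (z : F) ^ 2 ≠ 0 := pow_ne_zero 2 hzne
    have h2 : algebraMap F E (z ^ 2) ≠ 0 := by
      rw [map_ne_zero]; exact hz2
    have hc2 : c ^ 2 = algebraMap F E (b / z) := by
      have h1 : algebraMap F E (z * b) = algebraMap F E (z ^ 2) * c ^ 2 := by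
        rw [h, mul_pow, map_pow]
      have h3 : z * b = z ^ 2 * (b / z) := by
        field_simp
      rw [h3, map_mul] at h1
      exact (mul_left_cancel₀ h2 h1).symm
    obtain ⟨e, he⟩ := sqsurjF (b / z)
    simp only at he
    have he0 : e ≠ 0 := by
      intro h0
      rw [h0] at he
      exact absurd he.symm (by simpa using div_ne_zero hb hz.2)
    have hce : c = algebraMap F E e :=
      sqinjE (show c ^ 2 = (algebraMap F E e) ^ 2 by rw [hc2, ← map_pow, he])
    exact hnc ⟨e, he0, hce⟩
end

section
/- Let p be an odd prime, q = p^l, and m an odd positive integer. For a ∈ F_q, b ∈ F_q^*, c ∈ F_{q^m}, define Ω(a,b,c) = Σ_{z ∈ F_q^*} χ(za) Σ_{y ∈ F_{q^m}} χ'(-zby² + zcy) where χ, χ' are the canonical additive characters of F_q and F_{q^m}. Then Ω(a,b,c) = 0 if a + Tr_{q^m/q}(c²/(4b)) = 0; Ω(a,b,c) = q^{(m+1)/2}·(-1)^{l(p-1)(m+1)/4} if a + Tr_{q^m/q}(c²/(4b)) ≠ 0 and η'(-b)·η(a + Tr_{q^m/q}(c²/(4b))) = 1; and Ω(a,b,c)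 = q^{(m+1)/2}·(-1)^{(l(p-1)(m+1)+4)/4} if a + Tr_{q^m/q}(c²/(4b)) ≠ 0 and η'(-b)·η(a + Tr_{q^m/q}(c²/(4b))) = -1. -/
open scoped Classical
open Finset

/-!
Write `χ' = χ ∘ Tr_{q^m/q}`, `G = G(η, χ)` and `s = a + Tr_{q^m/q}(c²/(4b))`. Completing the
square evaluates the inner sum as `η'(-zb) G(η', χ') χ(z Tr_{q^m/q}(c²/(4b)))`. Because `m` is
odd, `η'` restricts to `η` on `F_q`, and `G(η', χ') = G^m`: in an orthogonal basis of the trace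
form the sum `∑_y χ(Tr(y²))` splits into `m` one-dimensional quadratic Gauss sums, and the product
of the diagonal entries is the discriminant, a square in `F_{q^m}` and hence in `F_q`. The outer
sum is then the twisted Gauss sum `η(s) G`, so `Ω = η'(-b) η(s) G^{m+1}`, and
`G² = η(-1) q` with `η(-1) = (-1)^{l(p-1)/2}`.
-/

/-- The quadratic character of a finite field, extended by `η 0 = 0`. -/
noncomputable def quadChar {F : Type*} [Field F] (c : F) : ℤ :=
  if c = 0 then 0 else if IsSquare c then 1 else -1

theorem isSquare_of_isSquare_algebraMap {K L : Type*} [Field K] [Field L] [Algebra K L]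
    [FiniteDimensional K L] (hL : Odd (Module.finrank K L)) {c : K}
    (hc : IsSquare (algebraMap K L c)) : IsSquare c := by
  obtain ⟨y, hy⟩ := hc
  obtain ⟨k, hk⟩ := hL
  rcases eq_or_ne c 0 with rfl | hc0
  · exact ⟨0, by simp⟩
  have hnorm : c ^ (2 * k + 1) = Algebra.norm K y * Algebra.norm K y := by
    rw [← hk, ← Algebra.norm_algebraMap, hy, map_mul]
  refine ⟨Algebra.norm K y / c ^ k, ?_⟩
  field_simp
  rw [sq (Algebra.norm K y), ← hnorm]
  ring

theorem quadraticChar_algebraMap {K L : Type*} [Field K] [Fintype K] [Field L] [Fintype L]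
    [Algebra K L] (hL : Odd (Module.finrank K L)) (c : K) :
    quadraticChar L (algebraMap K L c) = quadraticChar K c := by
  rcases eq_or_ne c 0 with rfl | hc
  · simp
  have hc' : algebraMap K L c ≠ 0 := (map_ne_zero _).mpr hc
  by_cases hsq : IsSquare c
  · rw [(quadraticChar_one_iff_isSquare hc).mpr hsq,
      (quadraticChar_one_iff_isSquare hc').mpr (hsq.map _)]
  · rw [quadraticChar_neg_one_iff_not_isSquare.mpr hsq,
      quadraticChar_neg_one_iff_not_isSquare.mpr (mt (isSquare_of_isSquare_algebraMap hL) hsq)]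

theorem isSquare_algebraMap_discr {K L ι : Type*} [Field K] [Field L] [Algebra K L]
    [FiniteDimensional K L] [IsGalois K L] [Fintype ι] [DecidableEq ι] (b : Module.Basis ι K L) :
    IsSquare (algebraMap K L (Algebra.discr K b)) := by
  have hcard : Fintype.card ι = Fintype.card Gal(L/K) := by
    rw [← Module.finrank_eq_card_basis b, ← Nat.card_eq_fintype_card,
      IsGalois.card_aut_eq_finrank]
  let e : ι ≃ Gal(L/K) := Fintype.equivOfCardEq hcard
  let M : Matrix ι ι L := Matrix.of fun i j => e j (b i)
  have hM : (Algebra.traceMatrix K b).map (algebraMap K L) = M * M.transpose := by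
    ext i j
    rw [Matrix.map_apply, Algebra.traceMatrix_apply, Algebra.traceForm_apply,
      trace_eq_sum_automorphisms, Matrix.mul_apply, ← e.sum_comp]
    simp [M]
  refine ⟨M.det, ?_⟩
  rw [Algebra.discr_def, RingHom.map_det, RingHom.mapMatrix_apply, hM, Matrix.det_mul,
    Matrix.det_transpose]

theorem Algebra.discr_eq_prod_of_isOrthoᵢ {K L ι : Type*} [CommRing K] [CommRing L]
    [Algebra K L] [Fintype ι] [DecidableEq ι] {v : ι → L}
    (hv : (Algebra.traceForm K L).IsOrthoᵢ v) :
    Algebra.discr K v = ∏ i, Algebra.trace K L (v i * v i) := by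
  rw [Algebra.discr_def, ← Matrix.det_diagonal]
  congr 1
  ext i j
  rcases eq_or_ne i j with rfl | hij
  · simp [Algebra.traceMatrix_apply]
  · simpa [Algebra.traceMatrix_apply, Matrix.diagonal_apply_ne _ hij] using hv hij

theorem LinearMap.BilinForm.apply_equivFun_symm_of_isOrthoᵢ {K V ι : Type*} [Field K]
    [AddCommGroup V] [Module K V] [Fintype ι] {B : LinearMap.BilinForm K V}
    {v : Module.Basis ι K V} (hv : B.IsOrthoᵢ v) (x : ι → K) :
    B (v.equivFun.symm x) (v.equivFun.symm x) = ∑ i, B (v i) (v i) * x i ^ 2 := by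
  simp only [Module.Basis.equivFun_symm_apply, map_sum, map_smul, LinearMap.sum_apply,
    LinearMap.smul_apply, smul_eq_mul]
  refine sum_congr rfl fun i _ => ?_
  rw [Finset.mul_sum, Finset.sum_eq_single i]
  · ring
  · intro j _ hji
    rw [hv hji]
    ring
  · simp

noncomputable def complexQuadraticChar (K : Type*) [Field K] [Fintype K] : MulChar K ℂ :=
  (quadraticChar K).ringHomComp (Int.castRingHom ℂ)

section QuadraticGaussSum

variable {K : Type*} [Field K] [Fintype K]

local notation "η" => complexQuadraticChar K

theorem complexQuadraticChar_apply (a : K) : η a = quadraticChar K a := rfl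

theorem complexQuadraticChar_mul_self {a : K} (ha : a ≠ 0) : η a * η a = 1 := by
  rcases quadraticChar_dichotomy ha with h | h <;> simp [complexQuadraticChar_apply, h]

theorem complexQuadraticChar_ne_one (hK : ringChar K ≠ 2) : η ≠ 1 :=
  (MulChar.ringHomComp_ne_one_iff (Int.castRingHom ℂ).injective_int).mpr
    (quadraticChar_ne_one hK)

theorem sum_complexQuadraticChar_mul_addChar (hK : ringChar K ≠ 2) (ψ : AddChar K ℂ) (s : K) :
    ∑ z, η z * ψ (z * s) = η s * gaussSum η ψ := by
  rcases eq_or_ne s 0 with rfl | hs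
  · simp [MulChar.sum_eq_zero_of_ne_one (complexQuadraticChar_ne_one hK), MulChar.map_zero]
  have h := gaussSum_mulShift η ψ (Units.mk0 s hs)
  simp only [Units.val_mk0] at h
  rw [← h, ← mul_assoc, complexQuadraticChar_mul_self hs, one_mul, gaussSum]
  simp only [AddChar.mulShift_apply, mul_comm s]

theorem sum_sq_eq_sum_complexQuadraticChar (hK : ringChar K ≠ 2) (f : K → ℂ) :
    ∑ x, f (x ^ 2) = ∑ t, (η t + 1) * f t := by
  rw [← sum_fiberwise_of_maps_to (g := fun x : K => x ^ 2) (fun x _ => mem_univ _)]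
  refine sum_congr rfl fun t _ => ?_
  have hcard : ((univ.filter fun x : K => x ^ 2 = t).card : ℂ) = η t + 1 := by
    have h := quadraticChar_card_sqrts hK t
    rw [Set.toFinset_ofPred] at h
    rw [complexQuadraticChar_apply]
    exact_mod_cast h
  rw [sum_congr rfl fun x hx => by rw [(mem_filter.mp hx).2], sum_const, nsmul_eq_mul, hcard]

theorem sum_addChar_mul_sq (hK : ringChar K ≠ 2) {ψ : AddChar K ℂ} (hψ : ψ ≠ 1)
    {d : K} (hd : d ≠ 0) : ∑ x, ψ (d * x ^ 2) = η d * gaussSum η ψ := by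
  rw [sum_sq_eq_sum_complexQuadraticChar hK fun t => ψ (d * t)]
  simp only [add_mul, one_mul, sum_add_distrib, mul_comm d]
  rw [sum_complexQuadraticChar_mul_addChar hK, AddChar.sum_mulShift d (.of_ne_one hψ), if_neg hd,
    Nat.cast_zero, add_zero]

theorem sum_addChar_quadratic (hK : ringChar K ≠ 2) {ψ : AddChar K ℂ} (hψ : ψ ≠ 1)
    {u : K} (hu : u ≠ 0) (v : K) :
    ∑ y, ψ (u * y ^ 2 + v * y) = η u * gaussSum η ψ * ψ (-(v ^ 2 / (4 * u))) := by
  have h2 : (2 : K) ≠ 0 := Ring.two_ne_zero hK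
  have h4 : (4 : K) ≠ 0 := by simpa [show (4 : K) = 2 * 2 by norm_num] using h2
  have hsq : ∀ y : K, u * (y - v / (2 * u)) ^ 2 + v * (y - v / (2 * u))
      = u * y ^ 2 + -(v ^ 2 / (4 * u)) := fun y => by
    field_simp
    ring
  rw [← (Equiv.subRight (v / (2 * u))).sum_comp]
  simp only [Equiv.subRight_apply, hsq, AddChar.map_add_eq_mul, ← sum_mul,
    sum_addChar_mul_sq hK hψ hu]

end QuadraticGaussSum

theorem AddChar.map_sum_eq_prod {ι A M : Type*} [AddCommMonoid A] [CommMonoid M]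
    (ψ : AddChar A M) (s : Finset ι) (f : ι → A) : ψ (∑ i ∈ s, f i) = ∏ i ∈ s, ψ (f i) :=
  map_prod ψ.toMonoidHom (fun i => Multiplicative.ofAdd (f i)) s

section TraceAddChar

variable {K L R : Type*} [Field K] [Field L] [Algebra K L] [CommMonoid R]

variable (L) in
noncomputable def traceAddChar (ψ : AddChar K R) : AddChar L R :=
  ψ.compAddMonoidHom (Algebra.trace K L).toAddMonoidHom

@[simp]
theorem traceAddChar_apply (ψ : AddChar K R) (x : L) :
    traceAddChar L ψ x = ψ (Algebra.trace K L x) := rfl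

theorem traceAddChar_ne_one [FiniteDimensional K L] [Algebra.IsSeparable K L]
    {ψ : AddChar K R} (hψ : ψ ≠ 1) : traceAddChar L ψ ≠ 1 := by
  obtain ⟨x, hx⟩ := AddChar.ne_one_iff.mp hψ
  obtain ⟨y, rfl⟩ := Algebra.trace_surjective K L x
  exact AddChar.ne_one_iff.mpr ⟨y, hx⟩

end TraceAddChar

theorem sum_addChar_trace_mul_self {F E : Type*} [Field F] [Fintype F] [Field E] [Fintype E]
    [Algebra F E] (hF : ringChar F ≠ 2) (hE : Odd (Module.finrank F E))
    {ψ : AddChar F ℂ} (hψ : ψ ≠ 1) :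
    ∑ y : E, ψ (Algebra.trace F E (y * y)) =
      gaussSum (complexQuadraticChar F) ψ ^ Module.finrank F E := by
  have : Invertible (2 : F) := invertibleOfNonzero (Ring.two_ne_zero hF)
  obtain ⟨v, hv⟩ := LinearMap.BilinForm.exists_orthogonal_basis
    (LinearMap.BilinForm.isSymm_iff.mp (Algebra.traceForm_isSymm F (S := E)))
  set w := fun i => Algebra.trace F E (v i * v i)
  have hw : ∀ i, w i ≠ 0 :=
    hv.not_isOrtho_basis_self_of_separatingLeft (traceForm_nondegenerate F E).1
  have hsq : quadraticChar F (∏ i, w i) = 1 := by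
    rw [quadraticChar_one_iff_isSquare (prod_ne_zero_iff.mpr fun i _ => hw i),
      ← Algebra.discr_eq_prod_of_isOrthoᵢ hv]
    exact isSquare_of_isSquare_algebraMap hE (isSquare_algebraMap_discr v)
  calc ∑ y : E, ψ (Algebra.trace F E (y * y))
      = ∑ x : Fin (Module.finrank F E) → F, ∏ i, ψ (w i * x i ^ 2) := by
        rw [← v.equivFun.symm.toEquiv.sum_comp]
        refine sum_congr rfl fun x _ => ?_
        rw [LinearEquiv.coe_toEquiv, ← Algebra.traceForm_apply,
          LinearMap.BilinForm.apply_equivFun_symm_of_isOrthoᵢ hv]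
        exact AddChar.map_sum_eq_prod ψ univ _
    _ = ∏ i, ∑ u, ψ (w i * u ^ 2) := by rw [Fintype.prod_sum]
    _ = ∏ i, (complexQuadraticChar F (w i) * gaussSum (complexQuadraticChar F) ψ) :=
        prod_congr rfl fun i _ => sum_addChar_mul_sq hF hψ (hw i)
    _ = gaussSum (complexQuadraticChar F) ψ ^ Module.finrank F E := by
        rw [prod_mul_distrib, ← map_prod, complexQuadraticChar_apply, hsq, prod_const,
          card_univ, Fintype.card_fin]
        simp

theorem gaussSum_complexQuadraticChar_traceAddChar {F E : Type*} [Field F] [Fintype F]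
    [Field E] [Fintype E] [Algebra F E] (hF : ringChar F ≠ 2) (hE : Odd (Module.finrank F E))
    {ψ : AddChar F ℂ} (hψ : ψ ≠ 1) :
    gaussSum (complexQuadraticChar E) (traceAddChar E ψ) =
      gaussSum (complexQuadraticChar F) ψ ^ Module.finrank F E := by
  have hE2 : ringChar E ≠ 2 := by rwa [← Algebra.ringChar_eq F E]
  have h := sum_addChar_mul_sq hE2 (traceAddChar_ne_one (L := E) hψ) one_ne_zero
  rw [MulChar.map_one, one_mul] at h
  rw [← h, ← sum_addChar_trace_mul_self hF hE hψ]
  simp [sq]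

section OmegaSum

variable {F E : Type*} [Field F] [Fintype F] [Field E] [Fintype E] [Algebra F E]

noncomputable def omegaSum (ψ : AddChar F ℂ) (a b : F) (c : E) : ℂ :=
  ∑ z ∈ univ.filter (fun z : F => z ≠ 0), ψ (z * a) * ∑ y : E,
    traceAddChar E ψ (-(algebraMap F E (z * b)) * y ^ 2 + algebraMap F E z * c * y)

theorem sum_traceAddChar_quadratic (hF : ringChar F ≠ 2) (hE : Odd (Module.finrank F E))
    {ψ : AddChar F ℂ} (hψ : ψ ≠ 1) {b : F} (hb : b ≠ 0) (c : E) {z : F} (hz : z ≠ 0) :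
    ∑ y : E, traceAddChar E ψ (-(algebraMap F E (z * b)) * y ^ 2 + algebraMap F E z * c * y) =
      complexQuadraticChar F z * complexQuadraticChar E (-algebraMap F E b) *
        gaussSum (complexQuadraticChar F) ψ ^ Module.finrank F E *
        ψ (z * Algebra.trace F E (c ^ 2 / (4 * algebraMap F E b))) := by
  have hE2 : ringChar E ≠ 2 := by rwa [← Algebra.ringChar_eq F E]
  have hzE : algebraMap F E z ≠ 0 := (map_ne_zero _).mpr hz
  have hbE : algebraMap F E b ≠ 0 := (map_ne_zero _).mpr hb
  have hu : -algebraMap F E (z * b) ≠ 0 := by simp [hz, hb]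
  have hshift : -((algebraMap F E z * c) ^ 2 / (4 * -algebraMap F E (z * b))) =
      z • (c ^ 2 / (4 * algebraMap F E b)) := by
    rw [Algebra.smul_def, map_mul]
    field_simp
  have hη : complexQuadraticChar E (algebraMap F E z) = complexQuadraticChar F z := by
    simp only [complexQuadraticChar_apply, quadraticChar_algebraMap hE]
  rw [sum_addChar_quadratic hE2 (traceAddChar_ne_one hψ) hu, hshift, traceAddChar_apply,
    map_smul, smul_eq_mul, gaussSum_complexQuadraticChar_traceAddChar hF hE hψ, map_mul,
    neg_mul_eq_mul_neg, map_mul, hη]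

theorem omegaSum_eq (hF : ringChar F ≠ 2) (hE : Odd (Module.finrank F E))
    {ψ : AddChar F ℂ} (hψ : ψ ≠ 1) (a : F) {b : F} (hb : b ≠ 0) (c : E) :
    omegaSum ψ a b c = complexQuadraticChar E (-algebraMap F E b) *
      complexQuadraticChar F (a + Algebra.trace F E (c ^ 2 / (4 * algebraMap F E b))) *
      gaussSum (complexQuadraticChar F) ψ ^ (Module.finrank F E + 1) := by
  set T := Algebra.trace F E (c ^ 2 / (4 * algebraMap F E b))
  have hsum : omegaSum ψ a b c = complexQuadraticChar E (-algebraMap F E b) *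
      gaussSum (complexQuadraticChar F) ψ ^ Module.finrank F E *
      ∑ z, complexQuadraticChar F z * ψ (z * (a + T)) := by
    rw [omegaSum, mul_sum, sum_filter]
    refine sum_congr rfl fun z _ => ?_
    split_ifs with hz
    · rw [sum_traceAddChar_quadratic hF hE hψ hb c hz, mul_add, AddChar.map_add_eq_mul]
      ring
    · simp [not_not.mp hz, MulChar.map_zero]
  rw [hsum, sum_complexQuadraticChar_mul_addChar hF, pow_succ]
  ring

end OmegaSum

theorem quadraticChar_neg_one_of_card_eq_pow {K : Type*} [Field K] [Fintype K]
    (hK : ringChar K ≠ 2) {p l : ℕ} (hp : Odd p) (hcard : Fintype.card K = p ^ l) :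
    quadraticChar K (-1) = ((-1) ^ (p / 2)) ^ l := by
  rw [quadraticChar_neg_one hK, hcard, Nat.cast_pow, map_pow,
    ZMod.χ₄_eq_neg_one_pow (Nat.odd_iff.mp hp)]

theorem gaussSum_complexQuadraticChar_pow_succ {K : Type*} [Field K] [Fintype K]
    (hK : ringChar K ≠ 2) {ψ : AddChar K ℂ} (hψ : ψ ≠ 1) {p l m : ℕ} (hp : Odd p)
    (hcard : Fintype.card K = p ^ l) (hm : Odd m) :
    gaussSum (complexQuadraticChar K) ψ ^ (m + 1) =
      (Fintype.card K : ℂ) ^ ((m + 1) / 2) * (-1) ^ (l * (p - 1) * (m + 1) / 4) := by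
  have hsq := gaussSum_sq (complexQuadraticChar_ne_one hK)
    ((quadraticChar_isQuadratic K).comp _) (AddChar.IsPrimitive.of_ne_one hψ)
  rw [complexQuadraticChar_apply, quadraticChar_neg_one_of_card_eq_pow hK hp hcard] at hsq
  obtain ⟨i, rfl⟩ := hp
  obtain ⟨j, rfl⟩ := hm
  have hexp : l * (2 * i + 1 - 1) * (2 * j + 1 + 1) / 4 = i * l * (j + 1) := by
    rw [show l * (2 * i + 1 - 1) * (2 * j + 1 + 1) = 4 * (i * l * (j + 1)) by
      rw [Nat.add_sub_cancel]; ring]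
    omega
  rw [hexp, show 2 * j + 1 + 1 = 2 * (j + 1) by ring, pow_mul, hsq,
    Nat.mul_div_cancel_left _ two_pos, show (2 * i + 1) / 2 = i by omega]
  push_cast
  rw [mul_pow, ← pow_mul, ← pow_mul, mul_comm, mul_assoc]

section CanonicalAddChar

variable (p : ℕ) [Fact p.Prime] (K : Type*) [Field K] [Algebra (ZMod p) K]

noncomputable def canonicalAddChar : AddChar K ℂ :=
  traceAddChar K (AddChar.zmodChar p (Complex.isPrimitiveRoot_exp p (NeZero.ne p)).pow_eq_one)

theorem canonicalAddChar_apply (x : K) :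
    canonicalAddChar p K x =
      Complex.exp (2 * Real.pi * Complex.I * (Algebra.trace (ZMod p) K x).val / p) := by
  rw [canonicalAddChar, traceAddChar_apply, AddChar.zmodChar_apply, ← Complex.exp_nat_mul]
  ring_nf

theorem canonicalAddChar_ne_one [Finite K] : canonicalAddChar p K ≠ 1 := by
  refine traceAddChar_ne_one (AddChar.ne_one_iff.mpr ⟨1, ?_⟩)
  rw [AddChar.zmodChar_apply, ZMod.val_one, pow_one]
  exact (Complex.isPrimitiveRoot_exp p (NeZero.ne p)).ne_one (Fact.out : p.Prime).one_lt

theorem canonicalAddChar_eq_traceAddChar (L : Type*) [Field L] [Finite L] [Finite K]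
    [Algebra (ZMod p) L] [Algebra K L] [IsScalarTower (ZMod p) K L] :
    canonicalAddChar p L = traceAddChar L (canonicalAddChar p K) := by
  ext x
  rw [canonicalAddChar, traceAddChar_apply, traceAddChar_apply, canonicalAddChar,
    traceAddChar_apply, Algebra.trace_trace]

end CanonicalAddChar

theorem quadChar_eq_quadraticChar {K : Type*} [Field K] [Fintype K] (c : K) :
    quadChar c = quadraticChar K c := by
  unfold quadChar
  split_ifs with h0 hsq
  · rw [h0, quadraticChar_zero]
  · exact ((quadraticChar_one_iff_isSquare h0).mpr hsq).symm
  · exact (quadraticChar_neg_one_iff_not_isSquare.mpr hsq).symm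

theorem stmt12_general {F E : Type*} [Field F] [Fintype F] [Field E] [Fintype E]
    [Algebra F E] (p : ℕ) (hp : p.Prime) (hpodd : Odd p)
    [Algebra (ZMod p) F] [Algebra (ZMod p) E]
    (l m : ℕ) (hm : Odd m)
    (hF : Fintype.card F = p ^ l) (hE : Fintype.card E = Fintype.card F ^ m)
    (a b : F) (hb : b ≠ 0) (c : E)
    (χ : F → ℂ) (χ' : E → ℂ)
    (hχ : ∀ x : F, χ x = Complex.exp (2 * Real.pi * Complex.I *
      (Algebra.trace (ZMod p) F x).val / p))
    (hχ' : ∀ x : E, χ' x = Complex.exp (2 * Real.pi * Complex.I *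
      (Algebra.trace (ZMod p) E x).val / p))
    (Ω : ℂ)
    (hΩ : Ω = ∑ z ∈ univ.filter (fun z : F => z ≠ 0),
      χ (z * a) * ∑ y : E,
        χ' (-(algebraMap F E (z * b)) * y ^ 2 + algebraMap F E z * c * y)) :
    (a + Algebra.trace F E (c ^ 2 / (4 * algebraMap F E b)) = 0 → Ω = 0) ∧
    (a + Algebra.trace F E (c ^ 2 / (4 * algebraMap F E b)) ≠ 0 →
      (quadChar (-(algebraMap F E b)) *
          quadChar (a + Algebra.trace F E (c ^ 2 / (4 * algebraMap F E b))) = 1 →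
        Ω = (Fintype.card F : ℂ) ^ ((m + 1) / 2)
            * (-1) ^ (l * (p - 1) * (m + 1) / 4)) ∧
      (quadChar (-(algebraMap F E b)) *
          quadChar (a + Algebra.trace F E (c ^ 2 / (4 * algebraMap F E b))) = -1 →
        Ω = (Fintype.card F : ℂ) ^ ((m + 1) / 2)
            * (-1) ^ ((l * (p - 1) * (m + 1) + 4) / 4))) := by
  have := Fact.mk hp
  have : CharP F p := charP_of_injective_algebraMap (algebraMap (ZMod p) F).injective p
  have : IsScalarTower (ZMod p) F E := .of_algebraMap_eq' (RingHom.ext_zmod _ _)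
  have hF2 : ringChar F ≠ 2 := by
    rw [ringChar.eq F p]
    rintro rfl
    exact Nat.not_odd_iff_even.mpr even_two hpodd
  have hrank : Module.finrank F E = m :=
    Nat.pow_right_injective Fintype.one_lt_card (Module.card_eq_pow_finrank.symm.trans hE)
  have hψ := canonicalAddChar_ne_one p F
  have hχ_eq : χ = canonicalAddChar p F :=
    funext fun x => (hχ x).trans (canonicalAddChar_apply p F x).symm
  have hχ'_eq : χ' = traceAddChar E (canonicalAddChar p F) := by
    rw [← canonicalAddChar_eq_traceAddChar]
    exact funext fun x => (hχ' x).trans (canonicalAddChar_apply p E x).symm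
  have hΩ_eq : Ω = omegaSum (canonicalAddChar p F) a b c := by
    rw [hΩ, hχ_eq, hχ'_eq, omegaSum]
  rw [omegaSum_eq hF2 (hrank ▸ hm) hψ a hb c, hrank,
    gaussSum_complexQuadraticChar_pow_succ hF2 hψ hpodd hF hm] at hΩ_eq
  simp only [hΩ_eq, complexQuadraticChar_apply, ← quadChar_eq_quadraticChar]
  refine ⟨fun hs => by simp [quadChar, hs], fun _ => ⟨fun hε => ?_, fun hε => ?_⟩⟩
  · rw [← Int.cast_mul, hε, Int.cast_one, one_mul]
  · rw [← Int.cast_mul, hε, Nat.add_div_right _ four_pos, pow_succ]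
    push_cast
    ring

/-- for odd `q = p^l` and odd `m`, the exponential sum
`Ω(a,b,c) = ∑_{z∈F_q^*} χ(za) ∑_{y∈F_{q^m}} χ'(-zby² + zcy)` takes the stated
values, depending on `a + Tr_{q^m/q}(c²/(4b))` and the quadratic characters. -/
theorem stmt12 {F E : Type*} [Field F] [Fintype F] [Field E] [Fintype E]
    [Algebra F E] (p : ℕ) (hp : p.Prime) (hpodd : Odd p)
    [Algebra (ZMod p) F] [Algebra (ZMod p) E]
    (l m : ℕ) (hl : 0 < l) (hm : Odd m)
    (hF : Fintype.card F = p ^ l) (hE : Fintype.card E = Fintype.card F ^ m)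
    (a b : F) (hb : b ≠ 0) (c : E)
    (χ : F → ℂ) (χ' : E → ℂ)
    (hχ : ∀ x : F, χ x = Complex.exp (2 * Real.pi * Complex.I *
      (Algebra.trace (ZMod p) F x).val / p))
    (hχ' : ∀ x : E, χ' x = Complex.exp (2 * Real.pi * Complex.I *
      (Algebra.trace (ZMod p) E x).val / p))
    (Ω : ℂ)
    (hΩ : Ω = ∑ z ∈ univ.filter (fun z : F => z ≠ 0),
      χ (z * a) * ∑ y : E,
        χ' (-(algebraMap F E (z * b)) * y ^ 2 + algebraMap F E z * c * y)) :
    (a + Algebra.trace F E (c ^ 2 / (4 * algebraMap F E b)) = 0 → Ω = 0) ∧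
    (a + Algebra.trace F E (c ^ 2 / (4 * algebraMap F E b)) ≠ 0 →
      (quadChar (-(algebraMap F E b)) *
          quadChar (a + Algebra.trace F E (c ^ 2 / (4 * algebraMap F E b))) = 1 →
        Ω = (Fintype.card F : ℂ) ^ ((m + 1) / 2)
            * (-1) ^ (l * (p - 1) * (m + 1) / 4)) ∧
      (quadChar (-(algebraMap F E b)) *
          quadChar (a + Algebra.trace F E (c ^ 2 / (4 * algebraMap F E b))) = -1 →
        Ω = (Fintype.card F : ℂ) ^ ((m + 1) / 2)
            * (-1) ^ ((l * (p - 1) * (m + 1) + 4) / 4))) :=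
  stmt12_general p hp hpodd l m hm hF hE a b hb c χ χ' hχ hχ' Ω hΩ
end

section
/- Let m be even and B₁, B₂ : F_{2^m} → F_2 bent functions with W = W_{B₁}(0)W_{B₂}(0) = ±2^m. The binary code of length 2^{2m-1} + W/2 with codewords (a + Tr(bx+cy))_{(x,y) ∈ D}, where D = {(x,y) : B₁(x) + B₂(y) = 0}, a ∈ F_2 and b, c ∈ F_{2^m}, has dimension 2m+1 and exactly three nonzero weights: 2^{2m-2} + W/4 - 2^{m-2} with multiplicity 2^{2m} - 1, 2^{2m-2} + W/4 + 2^{m-2} with multiplicity 2^{2m} - 1, and 2^{2m-1} + W/2 with multiplicity 1. -/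
open scoped Classical
open Finset

/-- The codeword `(a + Tr(bx + cy))_{(x,y) ∈ D}` with
`D = {(x,y) : B₁(x) + B₂(y) = 0}`, for `u = (a,b,c)`. -/
noncomputable def cw17 {K : Type*} [Field K] [Fintype K] [Algebra (ZMod 2) K]
    (B₁ B₂ : K → ZMod 2) (u : ZMod 2 × K × K) :
    {p : K × K // B₁ p.1 + B₂ p.2 = 0} → ZMod 2 :=
  fun p => u.1 + Algebra.trace (ZMod 2) K (u.2.1 * p.1.1 + u.2.2 * p.1.2)

/-- The Hamming weight of a codeword. -/
noncomputable def wt17 {K : Type*} [Fintype K] {B₁ B₂ : K → ZMod 2}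
    (f : {p : K × K // B₁ p.1 + B₂ p.2 = 0} → ZMod 2) : ℕ :=
  (univ.filter (fun p => f p ≠ 0)).card

/-! Write `χ s = (-1)^s` and `q = |K|`. Since `2·𝟙_D(x, y) = 1 + χ(B₁ x) χ(B₂ y)`, the character
sum of the codeword of `u = (a, b, c)` over `D` splits into two product sums:
`2 ∑_D χ(c_u) = χ(a) (T(b) T(c) + W_{B₁}(b) W_{B₂}(c))`, where `T(b) = ∑_x χ(Tr(bx))` is `q` for
`b = 0` and `0` otherwise. As `|D| - ∑_D χ(c_u) = 2 wt(c_u)`, this gives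
`4 wt(c_u) = q² + W - χ(a) (T(b) T(c) + W_{B₁}(b) W_{B₂}(c))`.
For `(b, c) ≠ 0` bentness makes `χ(a) W_{B₁}(b) W_{B₂}(c) = ±q`, and flipping `a` flips the sign,
so each of the weights `(q² + W ∓ q)/4` occurs once for every `(b, c) ≠ 0`; the remaining
nonzero codeword, `u = (1, 0, 0)`, has the full weight `(q² + W)/2`. All three weights are
positive, which makes `u ↦ c_u` injective. -/

lemma ZMod.eq_zero_or_eq_one (s : ZMod 2) : s = 0 ∨ s = 1 := by
  revert s; decide

lemma eq_one_zero_of_snd_eq_zero {α : Type*} [Zero α] {u : ZMod 2 × α} (hu : u ≠ 0)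
    (h2 : u.2 = 0) : u = (1, 0) := by
  obtain ⟨a, v⟩ := u
  obtain rfl : v = 0 := h2
  obtain rfl : a = 1 := a.eq_zero_or_eq_one.resolve_left (by simpa using hu)
  rfl

def signChar : AddChar (ZMod 2) ℤ := AddChar.zmodChar 2 (by norm_num : (-1 : ℤ) ^ 2 = 1)

lemma signChar_apply (s : ZMod 2) : signChar s = (-1) ^ s.val := rfl

@[simp] lemma signChar_one : signChar 1 = -1 := rfl

lemma signChar_eq_one_iff (s : ZMod 2) : signChar s = 1 ↔ s = 0 := by
  rcases s.eq_zero_or_eq_one with rfl | rfl <;> simp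

lemma signChar_eq_one_or_eq_neg_one (s : ZMod 2) : signChar s = 1 ∨ signChar s = -1 := by
  rcases s.eq_zero_or_eq_one with rfl | rfl <;> simp

lemma ite_eq_zero_two_eq_one_add_signChar (s : ZMod 2) :
    (if s = 0 then 2 else 0 : ℤ) = 1 + signChar s := by
  rcases s.eq_zero_or_eq_one with rfl | rfl <;> simp

lemma card_sub_sum_signChar {ι : Type*} [Fintype ι] (f : ι → ZMod 2) :
    (Fintype.card ι : ℤ) - ∑ i, signChar (f i) = 2 * #{i | f i ≠ 0} := by
  have h (s : ZMod 2) : 1 - signChar s = if s ≠ 0 then 2 else 0 := by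
    rcases s.eq_zero_or_eq_one with rfl | rfl <;> simp
  calc (Fintype.card ι : ℤ) - ∑ i, signChar (f i) = ∑ i, (1 - signChar (f i)) := by
        simp [Finset.sum_sub_distrib]
    _ = 2 * #{i | f i ≠ 0} := by
        simp only [h, Finset.natCast_card_filter, Finset.mul_sum, mul_ite, mul_one, mul_zero]

lemma card_filter_signChar_mul_eq {ι : Type*} [Fintype ι] (P : ι → Prop) [DecidablePred P]
    (s : ι → ℤ) {δ : ℤ} (hδ : δ ≠ 0) (hs : ∀ i, s i = δ ∨ s i = -δ) :
    #{u : ZMod 2 × ι | P u.2 ∧ signChar u.1 * s u.2 = δ} = #{i | P i} := by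
  have hneg : -δ ≠ δ := by omega
  refine Finset.card_nbij' Prod.snd (fun i => (if s i = δ then 0 else 1, i)) ?_ ?_ ?_ ?_
  · intro u hu
    simp_all
  · intro i hi
    rcases hs i with h | h <;> simp_all
  · rintro ⟨a, i⟩ hu
    rcases a.eq_zero_or_eq_one with rfl | rfl <;> simp at hu
    · simp [hu.2]
    · simp [show s i ≠ δ by omega]
  · intro i _
    rfl

lemma sq_add_add_pos {q W δ : ℤ} (hq : 2 < q) (hW : W = q ∨ W = -q) (hδ : δ = q ∨ δ = -q) :
    0 < q ^ 2 + W + δ := by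
  rcases hW with rfl | rfl <;> rcases hδ with rfl | rfl <;> nlinarith

lemma two_pow_weight_identities {m : ℕ} (hm : 2 ≤ m) {W : ℤ} (hW : 4 ∣ W) :
    2 * (2 ^ (2 * m - 1) + W / 2) = (2 ^ m) ^ 2 + W ∧
    4 * (2 ^ (2 * m - 2) + W / 4 - 2 ^ (m - 2)) = (2 ^ m) ^ 2 + W - 2 ^ m ∧
    4 * (2 ^ (2 * m - 2) + W / 4 + 2 ^ (m - 2)) = (2 ^ m) ^ 2 + W + 2 ^ m := by
  obtain ⟨k, rfl⟩ := Nat.exists_eq_add_of_le' hm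
  obtain ⟨w, rfl⟩ := hW
  rw [show 2 * (k + 2) - 1 = 2 * k + 3 by omega, show 2 * (k + 2) - 2 = 2 * k + 2 by omega,
    Nat.add_sub_cancel, Int.mul_ediv_cancel_left _ four_ne_zero,
    show (4 : ℤ) * w = 2 * (2 * w) by ring, Int.mul_ediv_cancel_left _ two_ne_zero]
  refine ⟨?_, ?_, ?_⟩ <;> ring

section Field

variable {K : Type*} [Field K] [Algebra (ZMod 2) K]

variable (K) in
noncomputable def traceChar : AddChar K ℤ :=
  signChar.compAddMonoidHom (Algebra.trace (ZMod 2) K).toAddMonoidHom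

lemma traceChar_apply (x : K) : traceChar K x = signChar (Algebra.trace (ZMod 2) K x) := rfl

variable [Fintype K]

lemma traceChar_ne_one : traceChar K ≠ 1 := by
  obtain ⟨y, hy⟩ : ∃ y : K, Algebra.trace (ZMod 2) K y ≠ 0 := by
    by_contra! h
    exact Algebra.trace_ne_zero (ZMod 2) K (LinearMap.ext h)
  refine AddChar.ne_one_iff.2 ⟨y, ?_⟩
  rwa [traceChar_apply, Ne, signChar_eq_one_iff]

lemma sum_traceChar_mul (b : K) :
    ∑ x, traceChar K (b * x) = if b = 0 then (Fintype.card K : ℤ) else 0 := by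
  simp_rw [mul_comm b]
  exact_mod_cast AddChar.sum_mulShift b (AddChar.IsPrimitive.of_ne_one traceChar_ne_one)

noncomputable def walsh (B : K → ZMod 2) (b : K) : ℤ :=
  ∑ x, signChar (B x + Algebra.trace (ZMod 2) K (b * x))

def IsBent (B : K → ZMod 2) : Prop := ∀ b, walsh B b ^ 2 = Fintype.card K

lemma isBent_of_walsh_eq_or {B : K → ZMod 2} {m : ℕ} (hm : Even m)
    (hK : Fintype.card K = 2 ^ m) (hB : ∀ b, walsh B b = 2 ^ (m / 2) ∨ walsh B b = -2 ^ (m / 2)) :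
    IsBent B := by
  intro b
  rw [hK, Nat.cast_pow, Nat.cast_ofNat, ← Nat.div_two_mul_two_of_even hm, pow_mul]
  rcases hB b with h | h <;> simp [h]

variable {B₁ B₂ : K → ZMod 2}

lemma walsh_mul_walsh_eq_or (h₁ : IsBent B₁) (h₂ : IsBent B₂) (b c : K) :
    walsh B₁ b * walsh B₂ c = Fintype.card K ∨
      walsh B₁ b * walsh B₂ c = -(Fintype.card K : ℤ) := by
  rw [← sq_eq_sq_iff_eq_or_eq_neg, mul_pow, h₁, h₂, sq]

lemma signChar_mul_walsh_mul_walsh_eq_or (h₁ : IsBent B₁) (h₂ : IsBent B₂)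
    (a : ZMod 2) (b c : K) :
    signChar a * (walsh B₁ b * walsh B₂ c) = Fintype.card K ∨
      signChar a * (walsh B₁ b * walsh B₂ c) = -(Fintype.card K : ℤ) := by
  rcases signChar_eq_one_or_eq_neg_one a with h | h <;>
    rcases walsh_mul_walsh_eq_or h₁ h₂ b c with h' | h' <;> simp [h, h']

variable (B₁ B₂)

lemma two_mul_sum_signChar_cw17 (a : ZMod 2) (b c : K) :
    2 * ∑ p, signChar (cw17 B₁ B₂ (a, b, c) p)
      = signChar a * ((∑ x, traceChar K (b * x)) * (∑ y, traceChar K (c * y))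
          + walsh B₁ b * walsh B₂ c) := by
  set Tr := Algebra.trace (ZMod 2) K
  have hD (z : K × K) :
      (if B₁ z.1 + B₂ z.2 = 0 then 2 else 0) * signChar (a + Tr (b * z.1 + c * z.2))
        = signChar a * (traceChar K (b * z.1) * traceChar K (c * z.2)
          + signChar (B₁ z.1 + Tr (b * z.1)) * signChar (B₂ z.2 + Tr (c * z.2))) := by
    rw [ite_eq_zero_two_eq_one_add_signChar]
    simp only [map_add, AddChar.map_add_eq_mul, traceChar_apply]
    ring
  unfold cw17
  rw [← Finset.sum_subtype (univ.filter fun z : K × K => B₁ z.1 + B₂ z.2 = 0) (by simp)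
      (fun z => signChar (a + Tr (b * z.1 + c * z.2))),
    Finset.mul_sum, Finset.sum_filter]
  simp only [← ite_zero_mul]
  rw [Finset.sum_congr rfl fun z _ => hD z]
  simp only [walsh, ← Finset.mul_sum, Fintype.sum_prod_type, Finset.sum_add_distrib,
    Finset.sum_mul_sum]
  rfl

lemma two_mul_card_subtype_eq :
    2 * (Fintype.card {p : K × K // B₁ p.1 + B₂ p.2 = 0} : ℤ)
      = (Fintype.card K : ℤ) ^ 2 + walsh B₁ 0 * walsh B₂ 0 := by
  have h := two_mul_sum_signChar_cw17 B₁ B₂ 0 0 0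
  simp only [cw17, zero_mul, add_zero, map_zero, AddChar.map_zero_eq_one] at h
  simpa [sq] using h

lemma four_mul_wt17_cw17 (u : ZMod 2 × K × K) :
    4 * (wt17 (cw17 B₁ B₂ u) : ℤ)
      = (Fintype.card K : ℤ) ^ 2 + walsh B₁ 0 * walsh B₂ 0
        - signChar u.1 * ((if u.2 = 0 then (Fintype.card K : ℤ) ^ 2 else 0)
          + walsh B₁ u.2.1 * walsh B₂ u.2.2) := by
  obtain ⟨a, b, c⟩ := u
  have hT : (∑ x, traceChar K (b * x)) * (∑ y, traceChar K (c * y))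
      = if (b, c) = 0 then (Fintype.card K : ℤ) ^ 2 else 0 := by
    simp only [sum_traceChar_mul, Prod.mk_eq_zero]
    split_ifs <;> simp_all [sq]
  have hwt := card_sub_sum_signChar (cw17 B₁ B₂ (a, b, c))
  have hsum := two_mul_sum_signChar_cw17 B₁ B₂ a b c
  rw [hT] at hsum
  rw [wt17]
  linear_combination -2 * hwt + two_mul_card_subtype_eq B₁ B₂ - hsum

lemma four_mul_wt17_cw17_of_snd_ne_zero {u : ZMod 2 × K × K} (hu : u.2 ≠ 0) :
    4 * (wt17 (cw17 B₁ B₂ u) : ℤ) = (Fintype.card K : ℤ) ^ 2 + walsh B₁ 0 * walsh B₂ 0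
      - signChar u.1 * (walsh B₁ u.2.1 * walsh B₂ u.2.2) := by
  rw [four_mul_wt17_cw17, if_neg hu, zero_add]

lemma four_mul_wt17_cw17_one_zero :
    4 * (wt17 (cw17 B₁ B₂ (1, 0)) : ℤ)
      = 2 * ((Fintype.card K : ℤ) ^ 2 + walsh B₁ 0 * walsh B₂ 0) := by
  rw [four_mul_wt17_cw17]
  simp only [if_pos, signChar_one, Prod.fst_zero, Prod.snd_zero]
  ring

lemma cw17_sub (u v : ZMod 2 × K × K) :
    cw17 B₁ B₂ (u - v) = cw17 B₁ B₂ u - cw17 B₁ B₂ v := by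
  funext p
  simp only [cw17, Prod.fst_sub, Prod.snd_sub, Pi.sub_apply]
  rw [show (u.2.1 - v.2.1) * p.1.1 + (u.2.2 - v.2.2) * p.1.2
      = (u.2.1 * p.1.1 + u.2.2 * p.1.2) - (v.2.1 * p.1.1 + v.2.2 * p.1.2) by ring, map_sub]
  ring

variable {B₁ B₂}

lemma four_mul_wt17_cw17_eq_or (h₁ : IsBent B₁) (h₂ : IsBent B₂) {u : ZMod 2 × K × K}
    (hu : u ≠ 0) :
    4 * (wt17 (cw17 B₁ B₂ u) : ℤ)
        = (Fintype.card K : ℤ) ^ 2 + walsh B₁ 0 * walsh B₂ 0 - Fintype.card K ∨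
      4 * (wt17 (cw17 B₁ B₂ u) : ℤ)
        = (Fintype.card K : ℤ) ^ 2 + walsh B₁ 0 * walsh B₂ 0 + Fintype.card K ∨
      4 * (wt17 (cw17 B₁ B₂ u) : ℤ)
        = 2 * ((Fintype.card K : ℤ) ^ 2 + walsh B₁ 0 * walsh B₂ 0) := by
  by_cases h2 : u.2 = 0
  · obtain rfl := eq_one_zero_of_snd_eq_zero hu h2
    exact Or.inr (Or.inr (four_mul_wt17_cw17_one_zero B₁ B₂))
  · rw [four_mul_wt17_cw17_of_snd_ne_zero B₁ B₂ h2]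
    rcases signChar_mul_walsh_mul_walsh_eq_or h₁ h₂ u.1 u.2.1 u.2.2 with h | h <;> rw [h]
    · exact Or.inl rfl
    · exact Or.inr (Or.inl (sub_neg_eq_add _ _))

lemma cw17_injective (h₁ : IsBent B₁) (h₂ : IsBent B₂) (hq : 2 < Fintype.card K) :
    Function.Injective (cw17 B₁ B₂) := by
  suffices h : ∀ u, cw17 B₁ B₂ u = 0 → u = 0 by
    intro u v huv
    exact sub_eq_zero.1 (h _ (by rw [cw17_sub, huv, sub_self]))
  intro u hu
  by_contra hne
  have hwt : wt17 (cw17 B₁ B₂ u) = 0 := by simp [hu, wt17]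
  have hq' : (2 : ℤ) < Fintype.card K := by exact_mod_cast hq
  have := sq_add_add_pos hq' (walsh_mul_walsh_eq_or h₁ h₂ 0 0) (Or.inl rfl)
  have := sq_add_add_pos hq' (walsh_mul_walsh_eq_or h₁ h₂ 0 0) (Or.inr rfl)
  rcases four_mul_wt17_cw17_eq_or h₁ h₂ hne with h | h | h <;> omega

lemma wt17_cw17_eq_iff (h₁ : IsBent B₁) (h₂ : IsBent B₂) (hq : 2 < Fintype.card K)
    {u : ZMod 2 × K × K} (hu : u ≠ 0) {δ t : ℤ}
    (hδ : δ = Fintype.card K ∨ δ = -(Fintype.card K : ℤ))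
    (ht : 4 * t = (Fintype.card K : ℤ) ^ 2 + walsh B₁ 0 * walsh B₂ 0 - δ) :
    (wt17 (cw17 B₁ B₂ u) : ℤ) = t ↔
      u.2 ≠ 0 ∧ signChar u.1 * (walsh B₁ u.2.1 * walsh B₂ u.2.2) = δ := by
  by_cases h2 : u.2 = 0
  · obtain rfl := eq_one_zero_of_snd_eq_zero hu h2
    have hpos := sq_add_add_pos (by exact_mod_cast hq) (walsh_mul_walsh_eq_or h₁ h₂ 0 0) hδ
    have h4 := four_mul_wt17_cw17_one_zero B₁ B₂
    simp only [Prod.snd_zero, ne_eq, not_true_eq_false, false_and, iff_false]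
    omega
  · have h4 := four_mul_wt17_cw17_of_snd_ne_zero B₁ B₂ h2
    simp only [h2, ne_eq, not_false_eq_true, true_and]
    omega

lemma card_filter_wt17_cw17_eq_of_four_mul (h₁ : IsBent B₁) (h₂ : IsBent B₂)
    (hq : 2 < Fintype.card K) {δ t : ℤ}
    (hδ : δ = Fintype.card K ∨ δ = -(Fintype.card K : ℤ))
    (ht : 4 * t = (Fintype.card K : ℤ) ^ 2 + walsh B₁ 0 * walsh B₂ 0 - δ) :
    #{u : ZMod 2 × K × K | u ≠ 0 ∧ (wt17 (cw17 B₁ B₂ u) : ℤ) = t} = Fintype.card K ^ 2 - 1 := by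
  have hδ0 : δ ≠ 0 := by omega
  have hs (v : K × K) : walsh B₁ v.1 * walsh B₂ v.2 = δ ∨ walsh B₁ v.1 * walsh B₂ v.2 = -δ := by
    rcases walsh_mul_walsh_eq_or h₁ h₂ v.1 v.2 with h | h <;> omega
  calc #{u : ZMod 2 × K × K | u ≠ 0 ∧ (wt17 (cw17 B₁ B₂ u) : ℤ) = t}
      = #{u : ZMod 2 × K × K | u.2 ≠ 0 ∧
          signChar u.1 * (walsh B₁ u.2.1 * walsh B₂ u.2.2) = δ} := by
        refine congrArg _ (Finset.filter_congr fun u _ => ?_)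
        by_cases hu : u = 0
        · simp [hu]
        · rw [wt17_cw17_eq_iff h₁ h₂ hq hu hδ ht, and_iff_right hu]
    _ = #{v : K × K | v ≠ 0} := by convert card_filter_signChar_mul_eq (· ≠ 0) _ hδ0 hs
    _ = Fintype.card K ^ 2 - 1 := by
        rw [Finset.filter_ne' univ, Finset.card_erase_of_mem (mem_univ _), card_univ,
          Fintype.card_prod, sq]

lemma card_filter_wt17_cw17_eq_of_two_mul (h₁ : IsBent B₁) (h₂ : IsBent B₂)
    (hq : 2 < Fintype.card K) {t : ℤ}
    (ht : 2 * t = (Fintype.card K : ℤ) ^ 2 + walsh B₁ 0 * walsh B₂ 0) :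
    #{u : ZMod 2 × K × K | u ≠ 0 ∧ (wt17 (cw17 B₁ B₂ u) : ℤ) = t} = 1 := by
  have hq' : (2 : ℤ) < Fintype.card K := by exact_mod_cast hq
  refine Finset.card_eq_one.2 ⟨(1, 0), ?_⟩
  ext u
  simp only [mem_filter, mem_univ, true_and, mem_singleton]
  constructor
  · rintro ⟨hu, hwt⟩
    by_contra hne
    have h4 := four_mul_wt17_cw17_of_snd_ne_zero B₁ B₂
      fun h2 => hne (eq_one_zero_of_snd_eq_zero hu h2)
    have hpos := sq_add_add_pos hq' (walsh_mul_walsh_eq_or h₁ h₂ 0 0)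
      (signChar_mul_walsh_mul_walsh_eq_or h₁ h₂ u.1 u.2.1 u.2.2)
    omega
  · rintro rfl
    exact ⟨by simp, by linarith [four_mul_wt17_cw17_one_zero B₁ B₂]⟩

end Field

/-- the binary code `C̄_{f₆,g₆}^{(2)}` from two bent functions has
length `2^{2m-1} + W/2`, dimension `2m+1`, and exactly the three stated nonzero
weights with the stated multiplicities. -/
theorem stmt17 {K : Type*} [Field K] [Fintype K] [Algebra (ZMod 2) K]
    (m : ℕ) (hm : Even m) (hm0 : 0 < m) (hK : Fintype.card K = 2 ^ m)
    (B₁ B₂ : K → ZMod 2)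
    (hB₁ : ∀ b : K,
      (∑ x : K, (-1 : ℤ) ^ (B₁ x + Algebra.trace (ZMod 2) K (b * x)).val)
        = 2 ^ (m / 2) ∨
      (∑ x : K, (-1 : ℤ) ^ (B₁ x + Algebra.trace (ZMod 2) K (b * x)).val)
        = -2 ^ (m / 2))
    (hB₂ : ∀ b : K,
      (∑ x : K, (-1 : ℤ) ^ (B₂ x + Algebra.trace (ZMod 2) K (b * x)).val)
        = 2 ^ (m / 2) ∨
      (∑ x : K, (-1 : ℤ) ^ (B₂ x + Algebra.trace (ZMod 2) K (b * x)).val)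
        = -2 ^ (m / 2))
    (W : ℤ)
    (hW : W = (∑ x : K, (-1 : ℤ) ^ (B₁ x).val) * (∑ x : K, (-1 : ℤ) ^ (B₂ x).val)) :
    ((Fintype.card {p : K × K // B₁ p.1 + B₂ p.2 = 0} : ℤ)
        = 2 ^ (2 * m - 1) + W / 2) ∧
    Function.Injective (cw17 B₁ B₂) ∧
    (∀ u : ZMod 2 × K × K, u ≠ 0 →
      (wt17 (cw17 B₁ B₂ u) : ℤ) = 2 ^ (2 * m - 2) + W / 4 - 2 ^ (m - 2) ∨
      (wt17 (cw17 B₁ B₂ u) : ℤ) = 2 ^ (2 * m - 2) + W / 4 + 2 ^ (m - 2) ∨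
      (wt17 (cw17 B₁ B₂ u) : ℤ) = 2 ^ (2 * m - 1) + W / 2) ∧
    (univ.filter (fun u : ZMod 2 × K × K => u ≠ 0 ∧
        (wt17 (cw17 B₁ B₂ u) : ℤ) = 2 ^ (2 * m - 2) + W / 4 - 2 ^ (m - 2))).card
      = 2 ^ (2 * m) - 1 ∧
    (univ.filter (fun u : ZMod 2 × K × K => u ≠ 0 ∧
        (wt17 (cw17 B₁ B₂ u) : ℤ) = 2 ^ (2 * m - 2) + W / 4 + 2 ^ (m - 2))).card
      = 2 ^ (2 * m) - 1 ∧
    (univ.filter (fun u : ZMod 2 × K × K => u ≠ 0 ∧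
        (wt17 (cw17 B₁ B₂ u) : ℤ) = 2 ^ (2 * m - 1) + W / 2)).card = 1 := by
  have hm2 : 2 ≤ m := by obtain ⟨j, rfl⟩ := hm; omega
  have h₁ : IsBent B₁ := isBent_of_walsh_eq_or hm hK hB₁
  have h₂ : IsBent B₂ := isBent_of_walsh_eq_or hm hK hB₂
  have hq : 2 < Fintype.card K :=
    hK ▸ Nat.lt_of_lt_of_le (by norm_num) (Nat.pow_le_pow_right two_pos hm2)
  have hqm : (Fintype.card K : ℤ) = 2 ^ m := by rw [hK]; push_cast; rfl
  obtain rfl : W = walsh B₁ 0 * walsh B₂ 0 := by simpa [walsh, signChar_apply] using hW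
  have h4W : (4 : ℤ) ∣ walsh B₁ 0 * walsh B₂ 0 := by
    have h4 : (4 : ℤ) ∣ 2 ^ m := pow_dvd_pow 2 hm2
    rcases walsh_mul_walsh_eq_or h₁ h₂ 0 0 with h | h <;> simpa [h, hqm] using h4
  obtain ⟨hfull, hsmall, hlarge⟩ := two_pow_weight_identities hm2 h4W
  rw [← hqm] at hfull hsmall hlarge
  have hcard : Fintype.card K ^ 2 - 1 = 2 ^ (2 * m) - 1 := by rw [hK, ← pow_mul, mul_comm]
  refine ⟨by linarith [two_mul_card_subtype_eq B₁ B₂], cw17_injective h₁ h₂ hq,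
    fun u hu => by rcases four_mul_wt17_cw17_eq_or h₁ h₂ hu with h | h | h <;> omega, ?_, ?_,
    card_filter_wt17_cw17_eq_of_two_mul h₁ h₂ hq hfull⟩
  · rw [← hcard]
    exact card_filter_wt17_cw17_eq_of_four_mul h₁ h₂ hq (Or.inl rfl) hsmall
  · rw [← hcard]
    exact card_filter_wt17_cw17_eq_of_four_mul h₁ h₂ hq (Or.inr rfl)
      (by rw [hlarge, sub_neg_eq_add])
end
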